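/- Let α > 1, let ρ be a state on (ℂ^d)^{⊗k}, and let F = Tr[Φ^d ρ] be its fidelity with the GHZ state, with F > 0. Then the multipartite sandwiched Rényi–Rains entanglement satisfies R̃_α(ρ) − (α/(α−1)) log₂ F ≥ log₂ d. -/

import Mathlib

open scoped BigOperators ComplexOrder

noncomputable section

/-- Index type of a `k`-partite system with local dimensions `d j`. -/
abbrev PIdx (k : ℕ) (d : Fin k → ℕ) := ∀ j : Fin k, Fin (d j)

/-- The trace norm `‖X‖₁ = Tr[√(XᴴX)]`. -/
noncomputable def traceNorm {n : Type*} [Fintype n] [DecidableEq n] (X : Matrix n n ℂ) : ℝ :=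
  (((Matrix.posSemidef_conjTranspose_mul_self X).1.eigenvectorUnitary : Matrix n n ℂ) *
    Matrix.diagonal ((fun x : ℝ => (x : ℂ)) ∘ Real.sqrt ∘ (Matrix.posSemidef_conjTranspose_mul_self X).1.eigenvalues) *
    (star (Matrix.posSemidef_conjTranspose_mul_self X).1.eigenvectorUnitary : Matrix n n ℂ)).trace.re

/-- Partial transpose on the parties in `S`. -/
def partialTranspose {k : ℕ} {d : Fin k → ℕ} (S : Finset (Fin k))
    (X : Matrix (PIdx k d) (PIdx k d) ℂ) : Matrix (PIdx k d) (PIdx k d) ℂ :=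
  Matrix.of fun a b =>
    X (fun j => if j ∈ S then b j else a j) (fun j => if j ∈ S then a j else b j)

/-- The set `M` of bipartition labels: nonempty subsets of the parties not containing party `0`. -/
def Bipartitions (k : ℕ) : Finset (Finset (Fin k)) :=
  Finset.univ.filter fun S => S.Nonempty ∧ ∀ i ∈ S, i.val ≠ 0

/-- A quantum state: PSD with unit trace. -/
def IsState {n : Type*} [Fintype n] (ρ : Matrix n n ℂ) : Prop :=
  ρ.PosSemidef ∧ ρ.trace = 1

/-- The Rains set `T(H_k)`. -/
def RainsSet (k : ℕ) (d : Fin k → ℕ) : Set (Matrix (PIdx k d) (PIdx k d) ℂ) :=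
  {τ | τ.PosSemidef ∧ ∃ f : Finset (Fin k) → Matrix (PIdx k d) (PIdx k d) ℂ,
    (∀ S ∈ Bipartitions k, (f S).PosSemidef) ∧
    τ = ∑ S ∈ Bipartitions k, f S ∧
    ∑ S ∈ Bipartitions k, traceNorm (partialTranspose S (f S)) ≤ 1}

/-- Apply a real function to a Hermitian matrix via the spectral decomposition. -/
noncomputable def herCfc {n : Type*} [Fintype n] [DecidableEq n] {A : Matrix n n ℂ}
    (hA : A.IsHermitian) (f : ℝ → ℝ) : Matrix n n ℂ :=
  (hA.eigenvectorUnitary : Matrix n n ℂ) *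
    Matrix.diagonal (fun i => (f (hA.eigenvalues i) : ℂ)) *
    (star hA.eigenvectorUnitary : Matrix n n ℂ)

/-- `log₂` of a Hermitian matrix, computed on its support. -/
noncomputable def matLog2 {n : Type*} [Fintype n] [DecidableEq n] (A : Matrix n n ℂ) :
    Matrix n n ℂ :=
  if hA : A.IsHermitian then herCfc hA (fun x => if x ≤ 0 then 0 else Real.logb 2 x) else 0

/-- `supp ρ ⊆ supp σ`, expressed as `ker σ ⊆ ker ρ`. -/
def SuppLE {n : Type*} [Fintype n] (ρ σ : Matrix n n ℂ) : Prop :=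
  ∀ v : n → ℂ, σ.mulVec v = 0 → ρ.mulVec v = 0

open Classical in
/-- Quantum relative entropy `D(ρ‖σ)`, valued in `ℝ ∪ {+∞}`. -/
noncomputable def relEnt {n : Type*} [Fintype n] [DecidableEq n] (ρ σ : Matrix n n ℂ) : EReal :=
  if SuppLE ρ σ then ((((ρ * (matLog2 ρ - matLog2 σ)).trace).re : ℝ) : EReal) else ⊤

/-- The genuine multipartite Rains entanglement (GMRE). -/
noncomputable def GMRE {k : ℕ} {d : Fin k → ℕ} (ρ : Matrix (PIdx k d) (PIdx k d) ℂ) : EReal :=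
  ⨅ τ ∈ RainsSet k d, relEnt ρ τ

/-- Real power of a Hermitian matrix, computed on its support. -/
noncomputable def matPow {n : Type*} [Fintype n] [DecidableEq n] (A : Matrix n n ℂ) (p : ℝ) :
    Matrix n n ℂ :=
  if hA : A.IsHermitian then herCfc hA (fun x => if x ≤ 0 then 0 else x ^ p) else 0

open Classical in
/-- Sandwiched Rényi relative entropy `D̃_α(ρ‖σ)`. -/
noncomputable def sandRenyi {n : Type*} [Fintype n] [DecidableEq n] (α : ℝ)
    (ρ σ : Matrix n n ℂ) : EReal :=
  if 1 < α ∧ ¬ SuppLE ρ σ then ⊤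
  else ((((α - 1)⁻¹ * Real.logb 2
    (((matPow (matPow σ ((1 - α) / (2 * α)) * ρ * matPow σ ((1 - α) / (2 * α))) α).trace).re)) : ℝ)
    : EReal)

/-- The multipartite sandwiched Rényi–Rains entanglement. -/
noncomputable def RenyiRains {k : ℕ} {d : Fin k → ℕ} (α : ℝ)
    (ρ : Matrix (PIdx k d) (PIdx k d) ℂ) : EReal :=
  ⨅ τ ∈ RainsSet k d, sandRenyi α ρ τ

/-- Complete positivity of a linear map on matrices. -/
def IsCP {n n' : Type*} [Fintype n] [DecidableEq n] [Fintype n'] [DecidableEq n']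
    (P : Matrix n n ℂ →ₗ[ℂ] Matrix n' n' ℂ) : Prop :=
  ∀ (m : ℕ) (X : Matrix (Fin m × n) (Fin m × n) ℂ), X.PosSemidef →
    (Matrix.of fun p q : Fin m × n' =>
      P (Matrix.of fun a b => X (p.1, a) (q.1, b)) p.2 q.2).PosSemidef

/-- Partial transpose as a linear map. -/
def ptMap {k : ℕ} {d : Fin k → ℕ} (S : Finset (Fin k)) :
    Matrix (PIdx k d) (PIdx k d) ℂ →ₗ[ℂ] Matrix (PIdx k d) (PIdx k d) ℂ where
  toFun := partialTranspose S
  map_add' X Y := by ext a b; simp [partialTranspose]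
  map_smul' c X := by ext a b; simp [partialTranspose]

/-- A selective multipartite PPT operation. -/
def IsSelectivePPT {k : ℕ} {d d' : Fin k → ℕ} {X : Type*} [Fintype X]
    (P : X → (Matrix (PIdx k d) (PIdx k d) ℂ →ₗ[ℂ] Matrix (PIdx k d') (PIdx k d') ℂ)) : Prop :=
  (∀ x, IsCP (P x)) ∧
  (∀ x, ∀ S ∈ Bipartitions k, IsCP ((ptMap S).comp ((P x).comp (ptMap S)))) ∧
  (∀ A, (∑ x, P x A).trace = A.trace)

/-- A PPT mixture. -/
def IsPPTMixture {k : ℕ} {d : Fin k → ℕ} (σ : Matrix (PIdx k d) (PIdx k d) ℂ) : Prop :=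
  ∃ (r : Finset (Fin k) → ℝ) (ω : Finset (Fin k) → Matrix (PIdx k d) (PIdx k d) ℂ),
    (∀ S ∈ Bipartitions k, 0 ≤ r S) ∧ (∑ S ∈ Bipartitions k, r S = 1) ∧
    (∀ S ∈ Bipartitions k, IsState (ω S) ∧ (partialTranspose S (ω S)).PosSemidef) ∧
    σ = ∑ S ∈ Bipartitions k, (r S : ℂ) • ω S

open Classical in
/-- The GHZ state `Φ^d` on `(ℂ^d)^{⊗k}`. -/
noncomputable def GHZ (k d : ℕ) :
    Matrix (PIdx k fun _ => d) (PIdx k fun _ => d) ℂ :=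
  (d : ℂ)⁻¹ • ∑ i : Fin d, ∑ j : Fin d,
    Matrix.of (fun a b : PIdx k fun _ => d =>
      if (∀ l, a l = i) ∧ (∀ l, b l = j) then (1 : ℂ) else 0)

open Classical in
/-- The completely dephased GHZ state `Φ̄^d`. -/
noncomputable def dephGHZ (k d : ℕ) :
    Matrix (PIdx k fun _ => d) (PIdx k fun _ => d) ℂ :=
  (d : ℂ)⁻¹ • ∑ i : Fin d,
    Matrix.of (fun a b : PIdx k fun _ => d =>
      if (∀ l, a l = i) ∧ (∀ l, b l = i) then (1 : ℂ) else 0)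

/-- Binary entropy. -/
noncomputable def h2 (p : ℝ) : ℝ := -(p * Real.logb 2 p) - (1 - p) * Real.logb 2 (1 - p)

/-- Binary relative entropy `D((a,1−a)‖(b,1−b))`. -/
noncomputable def binRelEnt (a b : ℝ) : ℝ :=
  a * Real.logb 2 (a / b) + (1 - a) * Real.logb 2 ((1 - a) / (1 - b))

end

section AuxLemmas

open Matrix

namespace HC

variable {n : Type*} [Fintype n] [DecidableEq n] {A : Matrix n n ℂ} (hA : A.IsHermitian)

/-- Shorthand for the eigenvector unitary. -/
noncomputable abbrev U : Matrix n n ℂ := (hA.eigenvectorUnitary : Matrix n n ℂ)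

lemma star_mul_self_U : star (U hA) * U hA = 1 :=
  Matrix.mem_unitaryGroup_iff'.mp hA.eigenvectorUnitary.2

lemma mul_star_self_U : U hA * star (U hA) = 1 :=
  Matrix.mem_unitaryGroup_iff.mp hA.eigenvectorUnitary.2

lemma herCfc_mul (f g : ℝ → ℝ) :
    herCfc hA f * herCfc hA g = herCfc hA (fun x => f x * g x) := by
  unfold herCfc
  have h1 : star (U hA) * (U hA) = 1 := star_mul_self_U hA
  calc (U hA * Matrix.diagonal (fun i => (f (hA.eigenvalues i) : ℂ)) * star (U hA)) *
        (U hA * Matrix.diagonal (fun i => (g (hA.eigenvalues i) : ℂ)) * star (U hA))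
      = U hA * (Matrix.diagonal (fun i => (f (hA.eigenvalues i) : ℂ)) *
          Matrix.diagonal (fun i => (g (hA.eigenvalues i) : ℂ))) * star (U hA) := by
        rw [Matrix.mul_assoc, Matrix.mul_assoc, Matrix.mul_assoc, ← Matrix.mul_assoc (star (U hA)),
          h1, Matrix.one_mul, ← Matrix.mul_assoc, ← Matrix.mul_assoc, ← Matrix.mul_assoc]
    _ = _ := by rw [Matrix.diagonal_mul_diagonal]; norm_cast

lemma herCfc_congr {f g : ℝ → ℝ} (h : ∀ i, f (hA.eigenvalues i) = g (hA.eigenvalues i)) :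
    herCfc hA f = herCfc hA g := by
  have hfg : (fun i => (f (hA.eigenvalues i) : ℂ)) = fun i => (g (hA.eigenvalues i) : ℂ) := by
    funext i; rw [h i]
  unfold herCfc
  rw [hfg]

lemma herCfc_id : herCfc hA (fun x => x) = A := by
  unfold herCfc
  conv_rhs => rw [hA.spectral_theorem]
  rfl

lemma herCfc_one : herCfc hA (fun _ => 1) = 1 := by
  unfold herCfc
  simp only [Complex.ofReal_one]
  rw [Matrix.diagonal_one, Matrix.mul_one, mul_star_self_U hA]

lemma herCfc_zero : herCfc hA (fun _ => 0) = 0 := by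
  unfold herCfc
  simp only [Complex.ofReal_zero, Matrix.diagonal_zero, Matrix.mul_zero, Matrix.zero_mul]

lemma herCfc_sub (f g : ℝ → ℝ) :
    herCfc hA f - herCfc hA g = herCfc hA (fun x => f x - g x) := by
  unfold herCfc
  rw [← Matrix.sub_mul, ← Matrix.mul_sub, Matrix.diagonal_sub]
  push_cast
  rfl

lemma herCfc_isHermitian (f : ℝ → ℝ) : (herCfc hA f).IsHermitian := by
  have hd : (Matrix.diagonal (fun i => (f (hA.eigenvalues i) : ℂ)))ᴴ
      = Matrix.diagonal (fun i => (f (hA.eigenvalues i) : ℂ)) := by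
    ext i j
    rcases eq_or_ne i j with h | h
    · subst h
      simp [Matrix.conjTranspose_apply, Matrix.diagonal_apply_eq, Complex.conj_ofReal]
    · simp [Matrix.conjTranspose_apply, Matrix.diagonal_apply_ne _ h,
        Matrix.diagonal_apply_ne' _ h]
  unfold herCfc Matrix.IsHermitian
  rw [Matrix.conjTranspose_mul, Matrix.conjTranspose_mul, hd, Matrix.star_eq_conjTranspose,
    Matrix.conjTranspose_conjTranspose, Matrix.mul_assoc]

lemma herCfc_trace (f : ℝ → ℝ) :
    (herCfc hA f).trace = ((∑ i, f (hA.eigenvalues i) : ℝ) : ℂ) := by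
  unfold herCfc
  rw [Matrix.trace_mul_cycle, star_mul_self_U hA, Matrix.one_mul, Matrix.trace_diagonal]
  push_cast
  rfl

lemma herCfc_quad (f : ℝ → ℝ) (v : n → ℂ) :
    star v ⬝ᵥ (herCfc hA f *ᵥ v) =
      ((∑ i, f (hA.eigenvalues i) * Complex.normSq ((star (U hA) *ᵥ v) i) : ℝ) : ℂ) := by
  unfold herCfc
  rw [← Matrix.mulVec_mulVec, ← Matrix.mulVec_mulVec, Matrix.dotProduct_mulVec (star v)]
  have hsw : star v ᵥ* (U hA) = star (star (U hA) *ᵥ v) := by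
    rw [Matrix.star_mulVec, Matrix.star_eq_conjTranspose, Matrix.conjTranspose_conjTranspose]
  rw [hsw]
  rw [dotProduct, Complex.ofReal_sum]
  apply Finset.sum_congr rfl
  intro i _
  rw [Matrix.mulVec_diagonal]
  rw [Pi.star_apply]
  rw [show star ((star (U hA) *ᵥ v) i) * ((f (hA.eigenvalues i) : ℂ) * (star (U hA) *ᵥ v) i)
      = (f (hA.eigenvalues i) : ℂ) * (star ((star (U hA) *ᵥ v) i) * (star (U hA) *ᵥ v) i) by ring]
  rw [show (star ((star (U hA) *ᵥ v) i) * (star (U hA) *ᵥ v) i)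
      = ((Complex.normSq ((star (U hA) *ᵥ v) i) : ℝ) : ℂ) by
    rw [Complex.star_def, ← Complex.normSq_eq_conj_mul_self]]
  push_cast
  ring

lemma unitary_normSq (v : n → ℂ) :
    ∑ i, Complex.normSq ((star (U hA) *ᵥ v) i) = ∑ i, Complex.normSq (v i) := by
  have h1 : ((∑ i, Complex.normSq ((star (U hA) *ᵥ v) i) : ℝ) : ℂ)
      = star (star (U hA) *ᵥ v) ⬝ᵥ (star (U hA) *ᵥ v) := by
    rw [dotProduct, Complex.ofReal_sum]
    apply Finset.sum_congr rfl
    intro i _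
    rw [Pi.star_apply, Complex.star_def, ← Complex.normSq_eq_conj_mul_self]
  have h2 : star (star (U hA) *ᵥ v) ⬝ᵥ (star (U hA) *ᵥ v) = star v ⬝ᵥ v := by
    have hsw : star (star (U hA) *ᵥ v) = star v ᵥ* (U hA) := by
      rw [Matrix.star_mulVec, Matrix.star_eq_conjTranspose, Matrix.conjTranspose_conjTranspose]
    rw [hsw, ← Matrix.dotProduct_mulVec, Matrix.mulVec_mulVec, mul_star_self_U hA,
      Matrix.one_mulVec]
  have h3 : ((∑ i, Complex.normSq (v i) : ℝ) : ℂ) = star v ⬝ᵥ v := by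
    rw [dotProduct, Complex.ofReal_sum]
    apply Finset.sum_congr rfl
    intro i _
    rw [Pi.star_apply, Complex.star_def, ← Complex.normSq_eq_conj_mul_self]
  have := h1.trans (h2.trans h3.symm)
  exact_mod_cast this

lemma normSq_sum_eq_dot (v : n → ℂ) :
    ((∑ i, Complex.normSq (v i) : ℝ) : ℂ) = star v ⬝ᵥ v := by
  rw [dotProduct, Complex.ofReal_sum]
  apply Finset.sum_congr rfl
  intro i _
  rw [Pi.star_apply, Complex.star_def, ← Complex.normSq_eq_conj_mul_self]

lemma matPow_eq (p : ℝ) : matPow A p = herCfc hA (fun x => if x ≤ 0 then 0 else x ^ p) := by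
  unfold matPow
  rw [dif_pos hA]

lemma sigma_mul_one_sub_proj {σ : Matrix n n ℂ} (hσ : σ.PosSemidef) :
    σ * (1 - herCfc hσ.1 (fun x => if x ≤ 0 then 0 else 1)) = 0 := by
  have h1 : (1 : Matrix n n ℂ) - herCfc hσ.1 (fun x => if x ≤ 0 then 0 else 1)
      = herCfc hσ.1 (fun x => 1 - (if x ≤ 0 then 0 else 1)) := by
    rw [← herCfc_one hσ.1, herCfc_sub]
  have h2 : herCfc hσ.1 (fun x => x) * herCfc hσ.1 (fun x => 1 - (if x ≤ 0 then 0 else 1))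
      = 0 := by
    rw [herCfc_mul]
    have h3 : herCfc hσ.1 (fun x => x * (1 - if x ≤ 0 then 0 else 1))
        = herCfc hσ.1 (fun _ => 0) := by
      apply herCfc_congr
      intro i
      have hnn := hσ.eigenvalues_nonneg i
      by_cases h : hσ.1.eigenvalues i ≤ 0
      · have h0 : hσ.1.eigenvalues i = 0 := le_antisymm h hnn
        simp [h0]
      · simp [h]
    rw [h3, herCfc_zero]
  calc σ * (1 - herCfc hσ.1 fun x => if x ≤ 0 then 0 else 1)
      = herCfc hσ.1 (fun x => x) * (1 - herCfc hσ.1 fun x => if x ≤ 0 then 0 else 1) := by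
        rw [herCfc_id]
    _ = 0 := by rw [h1]; exact h2

lemma proj_mul_rho_mul_proj {σ ρ : Matrix n n ℂ} (hσ : σ.PosSemidef) (hρ : ρ.IsHermitian)
    (hsupp : SuppLE ρ σ) :
    herCfc hσ.1 (fun x => if x ≤ 0 then 0 else 1) * ρ *
      herCfc hσ.1 (fun x => if x ≤ 0 then 0 else 1) = ρ := by
  set Pj := herCfc hσ.1 (fun x => if x ≤ 0 then 0 else 1) with hPj
  have hzero : ρ * (1 - Pj) = 0 := by
    apply Matrix.ext
    intro i j
    have hcol : (ρ * (1 - Pj)) *ᵥ Pi.single j 1 = 0 := by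
      rw [← Matrix.mulVec_mulVec]
      apply hsupp
      rw [Matrix.mulVec_mulVec, hPj, sigma_mul_one_sub_proj hσ, Matrix.zero_mulVec]
    have h2 := congrFun hcol i
    simpa using h2
  have hrP : ρ * Pj = ρ := by
    have h2 : ρ - ρ * Pj = 0 := by
      calc ρ - ρ * Pj = ρ * (1 - Pj) := by rw [Matrix.mul_sub, Matrix.mul_one]
        _ = 0 := hzero
    have h3 := sub_eq_zero.mp h2
    exact h3.symm
  have hPr : Pj * ρ = ρ := by
    have hPh : Pj.IsHermitian := herCfc_isHermitian hσ.1 _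
    have h4 : (ρ * Pj)ᴴ = ρᴴ := by rw [hrP]
    rw [Matrix.conjTranspose_mul, hPh.eq, hρ.eq] at h4
    exact h4
  rw [Matrix.mul_assoc, hrP, hPr]

lemma key_bound [Nonempty n] {σ ρ : Matrix n n ℂ} (hσ : σ.PosSemidef) (hρ : ρ.PosSemidef)
    (hsupp : SuppLE ρ σ) {α : ℝ} (hα : 1 < α) (φ : n → ℂ)
    (hφ : ∑ i, Complex.normSq (φ i) = 1)
    {F q : ℝ} (hF : (F : ℂ) = star φ ⬝ᵥ ρ *ᵥ φ) (hq : (q : ℂ) = star φ ⬝ᵥ σ *ᵥ φ)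
    (hFpos : 0 < F) :
    0 < q ∧ F ^ α * q ^ (1 - α) ≤
      ((matPow (matPow σ ((1 - α) / (2 * α)) * ρ * matPow σ ((1 - α) / (2 * α))) α).trace).re := by
  have hα0 : (0 : ℝ) < α := by linarith
  set c : ℝ := (1 - α) / (2 * α) with hc
  set γ : ℝ := (α - 1) / α with hγ
  have hγ0 : 0 < γ := by
    apply div_pos <;> linarith
  have hγ1 : γ < 1 := by
    rw [hγ, div_lt_one hα0]; linarith
  have hαne : α ≠ 0 := ne_of_gt hα0
  have hcc : -c + -c = γ := by rw [hc, hγ]; field_simp; ring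
  -- eigen-data of σ
  set lam := hσ.1.eigenvalues with hlam
  have hlam_nn : ∀ i, 0 ≤ lam i := fun i => hσ.eigenvalues_nonneg i
  set t : n → ℝ := fun i => Complex.normSq ((star (U hσ.1) *ᵥ φ) i) with ht
  have ht_nn : ∀ i, 0 ≤ t i := fun i => Complex.normSq_nonneg _
  have ht_sum : ∑ i, t i = 1 := by rw [ht]; rw [unitary_normSq hσ.1 φ]; exact hφ
  -- q as a sum
  have hq_sum : q = ∑ i, lam i * t i := by
    have : (q : ℂ) = ((∑ i, lam i * t i : ℝ) : ℂ) := by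
      rw [hq]
      conv_lhs => rw [← herCfc_id hσ.1]
      rw [herCfc_quad]
    exact_mod_cast this
  have hq_nonneg : 0 ≤ q := by
    rw [hq_sum]
    exact Finset.sum_nonneg fun i _ => mul_nonneg (hlam_nn i) (ht_nn i)
  have hq_pos : 0 < q := by
    rcases lt_or_eq_of_le hq_nonneg with h | h
    · exact h
    · exfalso
      have hq0 : (star φ ⬝ᵥ σ *ᵥ φ) = 0 := by rw [← hq, ← h]; simp
      have hσφ : σ *ᵥ φ = 0 := (hσ.dotProduct_mulVec_zero_iff φ).mp hq0
      have hρφ : ρ *ᵥ φ = 0 := hsupp φ hσφ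
      have : (F : ℂ) = 0 := by rw [hF, hρφ, dotProduct_zero]
      have : F = 0 := by exact_mod_cast this
      linarith
  -- the matrices
  set Pc := matPow σ c with hPc
  set Pm := matPow σ (-c) with hPm
  have hPc_eq : Pc = herCfc hσ.1 (fun x => if x ≤ 0 then 0 else x ^ c) := matPow_eq hσ.1 c
  have hPm_eq : Pm = herCfc hσ.1 (fun x => if x ≤ 0 then 0 else x ^ (-c)) := matPow_eq hσ.1 (-c)
  have hPc_herm : Pc.IsHermitian := by rw [hPc_eq]; exact herCfc_isHermitian _ _
  have hPm_herm : Pm.IsHermitian := by rw [hPm_eq]; exact herCfc_isHermitian _ _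
  set A := Pc * ρ * Pc with hAdef
  have hA : A.PosSemidef := by
    have := hρ.conjTranspose_mul_mul_same Pc
    rwa [hPc_herm.eq] at this
  -- Pm * Pc = projection
  have hproj : Pm * Pc = herCfc hσ.1 (fun x => if x ≤ 0 then 0 else 1) := by
    rw [hPm_eq, hPc_eq, herCfc_mul]
    apply herCfc_congr
    intro i
    by_cases h : hσ.1.eigenvalues i ≤ 0
    · simp [h]
    · push_neg at h
      simp only [not_le.mpr h, if_false]
      rw [← Real.rpow_add h, neg_add_cancel, Real.rpow_zero]
  have hprojc : Pc * Pm = herCfc hσ.1 (fun x => if x ≤ 0 then 0 else 1) := by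
    rw [hPm_eq, hPc_eq, herCfc_mul]
    apply herCfc_congr
    intro i
    by_cases h : hσ.1.eigenvalues i ≤ 0
    · simp [h]
    · push_neg at h
      simp only [not_le.mpr h, if_false]
      rw [← Real.rpow_add h, add_neg_cancel, Real.rpow_zero]
  -- ψ and its data
  set ψ : n → ℂ := Pm *ᵥ φ with hψ
  have hstarψ : star ψ = star φ ᵥ* Pm := by
    rw [hψ, Matrix.star_mulVec, hPm_herm.eq]
  -- F = ⟨ψ, A ψ⟩
  have hPAP : Pm * A * Pm = ρ := by
    have h1 : Pm * A * Pm = (Pm * Pc) * ρ * (Pc * Pm) := by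
      rw [hAdef]; noncomm_ring
    rw [h1, hproj, hprojc]
    exact proj_mul_rho_mul_proj hσ hρ.1 hsupp
  have hFψ : (F : ℂ) = star ψ ⬝ᵥ A *ᵥ ψ := by
    calc (F : ℂ) = star φ ⬝ᵥ ρ *ᵥ φ := hF
      _ = star φ ⬝ᵥ (Pm * A * Pm) *ᵥ φ := by rw [hPAP]
      _ = star ψ ⬝ᵥ A *ᵥ ψ := by
          rw [hstarψ, hψ, ← Matrix.dotProduct_mulVec]
          simp only [Matrix.mulVec_mulVec, Matrix.mul_assoc]
  -- eigen-data of A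
  set mu := hA.1.eigenvalues with hmu
  have hmu_nn : ∀ j, 0 ≤ mu j := fun j => hA.eigenvalues_nonneg j
  set s : n → ℝ := fun j => Complex.normSq ((star (U hA.1) *ᵥ ψ) j) with hs
  have hs_nn : ∀ j, 0 ≤ s j := fun j => Complex.normSq_nonneg _
  have hF_sum : F = ∑ j, mu j * s j := by
    have : (F : ℂ) = ((∑ j, mu j * s j : ℝ) : ℂ) := by
      rw [hFψ]
      conv_lhs => rw [← herCfc_id hA.1]
      rw [herCfc_quad]
    exact_mod_cast this
  -- norm of ψ
  have hcg : herCfc hσ.1 (fun x =>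
        (if x ≤ 0 then (0:ℝ) else x ^ (-c)) * (if x ≤ 0 then 0 else x ^ (-c)))
      = herCfc hσ.1 (fun x => if x ≤ 0 then 0 else x ^ γ) := by
    apply herCfc_congr
    intro i
    rcases le_or_gt (hσ.1.eigenvalues i) 0 with h | h
    · simp [h]
    · rw [if_neg (not_le.mpr h), ← Real.rpow_add h, hcc, if_neg (not_le.mpr h)]
  have hnψ : ∑ j, s j = ∑ i, (if lam i ≤ 0 then 0 else lam i ^ γ) * t i := by
    have h1 : ((∑ j, s j : ℝ) : ℂ)
        = ((∑ i, (if lam i ≤ 0 then 0 else lam i ^ γ) * t i : ℝ) : ℂ) := by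
      simp only [hs]
      rw [unitary_normSq hA.1 ψ]
      rw [normSq_sum_eq_dot ψ]
      conv_lhs => rw [hstarψ, hψ]
      rw [← Matrix.dotProduct_mulVec, Matrix.mulVec_mulVec]
      rw [hPm_eq, herCfc_mul, hcg, herCfc_quad]
      try simp only [ht, hlam]
    exact_mod_cast h1
  have hnψ2 : ∑ j, s j = ∑ i, lam i ^ γ * t i := by
    rw [hnψ]
    apply Finset.sum_congr rfl
    intro i _
    congr 1
    by_cases h : lam i ≤ 0
    · have h0 : lam i = 0 := le_antisymm h (hlam_nn i)
      rw [if_pos h, h0, Real.zero_rpow (ne_of_gt hγ0)]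
    · rw [if_neg h]
  -- Jensen: ∑ t λ^γ ≤ q^γ
  have hJ : ∑ i, t i * lam i ^ γ ≤ q ^ γ := by
    have hp : (1 : ℝ) ≤ 1 / γ := by
      rw [le_div_iff₀ hγ0]; linarith
    have hkey := Real.rpow_arith_mean_le_arith_mean_rpow Finset.univ t
      (fun i => lam i ^ γ) (fun i _ => ht_nn i) ht_sum
      (fun i _ => Real.rpow_nonneg (hlam_nn i) γ) hp
    have hsimp : ∑ i, t i * (lam i ^ γ) ^ (1 / γ) = q := by
      rw [hq_sum]
      apply Finset.sum_congr rfl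
      intro i _
      rw [← Real.rpow_mul (hlam_nn i), mul_one_div, div_self (ne_of_gt hγ0), Real.rpow_one]
      ring
    rw [hsimp] at hkey
    have hS_nn : 0 ≤ ∑ i, t i * lam i ^ γ :=
      Finset.sum_nonneg fun i _ => mul_nonneg (ht_nn i) (Real.rpow_nonneg (hlam_nn i) γ)
    calc ∑ i, t i * lam i ^ γ
        = ((∑ i, t i * lam i ^ γ) ^ (1 / γ)) ^ γ := by
          rw [← Real.rpow_mul hS_nn, one_div_mul_cancel (ne_of_gt hγ0), Real.rpow_one]
      _ ≤ q ^ γ := Real.rpow_le_rpow (Real.rpow_nonneg hS_nn _) hkey (le_of_lt hγ0)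
  have hψ_le : ∑ j, s j ≤ q ^ γ := by
    rw [hnψ2]
    calc ∑ i, lam i ^ γ * t i = ∑ i, t i * lam i ^ γ := by
          apply Finset.sum_congr rfl; intro i _; ring
      _ ≤ q ^ γ := hJ
  -- max eigenvalue
  obtain ⟨j0, -, hj0⟩ := Finset.exists_max_image Finset.univ mu Finset.univ_nonempty
  have hFle : F ≤ mu j0 * q ^ γ := by
    have h1 : F ≤ mu j0 * ∑ j, s j := by
      rw [hF_sum, Finset.mul_sum]
      apply Finset.sum_le_sum
      intro j _
      exact mul_le_mul_of_nonneg_right (hj0 j (Finset.mem_univ j)) (hs_nn j)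
    have h2 : mu j0 * ∑ j, s j ≤ mu j0 * q ^ γ := by
      apply mul_le_mul_of_nonneg_left hψ_le (hmu_nn j0)
    linarith
  have hqγpos : 0 < q ^ γ := Real.rpow_pos_of_pos hq_pos γ
  have hmu_pos : 0 < mu j0 := by
    by_contra h
    push_neg at h
    have : mu j0 * q ^ γ ≤ 0 := mul_nonpos_of_nonpos_of_nonneg h (le_of_lt hqγpos)
    linarith
  have hmulb : F / q ^ γ ≤ mu j0 := by
    rw [div_le_iff₀ hqγpos]; exact hFle
  -- trace bound
  have htr : ((matPow A α).trace).re = ∑ j, (if mu j ≤ 0 then 0 else mu j ^ α) := by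
    rw [matPow_eq hA.1, herCfc_trace]
    rw [Complex.ofReal_re]
  refine ⟨hq_pos, ?_⟩
  rw [htr]
  have hterm_nn : ∀ j, (0:ℝ) ≤ if mu j ≤ 0 then 0 else mu j ^ α := by
    intro j
    by_cases h : mu j ≤ 0
    · rw [if_pos h]
    · rw [if_neg h]
      exact Real.rpow_nonneg (le_of_lt (not_le.mp h)) α
  have hterm : mu j0 ^ α ≤ ∑ j, (if mu j ≤ 0 then 0 else mu j ^ α) := by
    have h6 := Finset.single_le_sum (f := fun j => if mu j ≤ 0 then (0:ℝ) else mu j ^ α)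
      (fun j _ => hterm_nn j) (Finset.mem_univ j0)
    simp only [not_le.mpr hmu_pos, if_false] at h6
    exact h6
  have hfinal : F ^ α * q ^ (1 - α) ≤ mu j0 ^ α := by
    have h1 : (F / q ^ γ) ^ α ≤ mu j0 ^ α :=
      Real.rpow_le_rpow (by positivity) hmulb (le_of_lt hα0)
    have h2 : (F / q ^ γ) ^ α = F ^ α * q ^ (1 - α) := by
      rw [Real.div_rpow (le_of_lt hFpos) (Real.rpow_nonneg (le_of_lt hq_pos) γ)]
      rw [← Real.rpow_mul (le_of_lt hq_pos)]
      rw [show γ * α = α - 1 by rw [hγ]; field_simp]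
      rw [div_eq_mul_inv, ← Real.rpow_neg (le_of_lt hq_pos), neg_sub]
    linarith [h2 ▸ h1]
  linarith

lemma herCfc_posSemidef (f : ℝ → ℝ) (hf : ∀ x, 0 ≤ f x) : (herCfc hA f).PosSemidef := by
  refine Matrix.PosSemidef.of_dotProduct_mulVec_nonneg (herCfc_isHermitian hA f) fun v => ?_
  rw [herCfc_quad]
  rw [Complex.zero_le_real]
  exact Finset.sum_nonneg fun i _ => mul_nonneg (hf _) (Complex.normSq_nonneg _)

lemma herm_quad_real {M : Matrix n n ℂ} (hM : M.IsHermitian) (v : n → ℂ) :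
    star v ⬝ᵥ M *ᵥ v = (((star v ⬝ᵥ M *ᵥ v).re : ℝ) : ℂ) := by
  have h := herCfc_quad hM (fun x => x) v
  rw [herCfc_id] at h
  rw [h, Complex.ofReal_re]

lemma col_norm_one (j : n) : ∑ i, Complex.normSq ((U hA) i j) = 1 := by
  have h := congrFun (congrFun (star_mul_self_U hA) j) j
  have hone : (1 : Matrix n n ℂ) j j = 1 := Matrix.one_apply_eq j
  have hmul : (star (U hA) * U hA) j j = ((∑ i, Complex.normSq ((U hA) i j) : ℝ) : ℂ) := by
    rw [Matrix.mul_apply, Complex.ofReal_sum]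
    apply Finset.sum_congr rfl
    intro a _
    rw [Matrix.star_apply, Complex.star_def, ← Complex.normSq_eq_conj_mul_self]
  rw [hmul, hone] at h
  exact_mod_cast h

lemma trace_mul_diagonal (M : Matrix n n ℂ) (v : n → ℂ) :
    (M * Matrix.diagonal v).trace = ∑ j, M j j * v j := by
  simp [Matrix.trace, Matrix.diag, Matrix.mul_apply, Matrix.diagonal_apply, Finset.mul_sum,
    mul_ite, mul_zero]

lemma conj_col (X : Matrix n n ℂ) (Uu : Matrix n n ℂ) (j : n) :
    (star Uu * X * Uu) j j = star (fun i => Uu i j) ⬝ᵥ X *ᵥ (fun i => Uu i j) := by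
  simp only [Matrix.mul_apply, Matrix.star_apply, dotProduct, Matrix.mulVec,
    Pi.star_apply, Finset.sum_mul, Finset.mul_sum]
  rw [Finset.sum_comm]
  apply Finset.sum_congr rfl
  intro a _
  apply Finset.sum_congr rfl
  intro b _
  ring

lemma traceNorm_hermitian {Y : Matrix n n ℂ} (hY : Y.IsHermitian) :
    traceNorm Y = ∑ i, |hY.eigenvalues i| := by
  have hsq : Yᴴ * Y = herCfc hY (fun x => x * x) := by
    have h1 := herCfc_mul hY (fun x => x) (fun x => x)
    rw [herCfc_id] at h1
    rw [hY.eq]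
    exact h1
  have hYY := (Matrix.posSemidef_conjTranspose_mul_self Y).1
  have hcfc : ∀ {B : Matrix n n ℂ} (hB : B.IsHermitian) (f : ℝ → ℝ), herCfc hB f = cfc f B := by
    intro B hB f
    rw [hB.cfc_eq f, Matrix.IsHermitian.cfc, Unitary.conjStarAlgAut_apply]
    rfl
  have heq : herCfc hY (fun x => |x|) = herCfc hYY Real.sqrt := by
    rw [hcfc, hcfc, hsq, hcfc, ← cfc_comp Real.sqrt (fun x => x * x) Y]
    congr 1
    funext x
    exact (Real.sqrt_mul_self_eq_abs x).symm
  show _ = ∑ i, |hY.eigenvalues i|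
  change (herCfc hYY Real.sqrt).trace.re = _
  rw [← heq, herCfc_trace, Complex.ofReal_re]

lemma trace_mul_re_le {X Y : Matrix n n ℂ} (hY : Y.IsHermitian) {C : ℝ}
    (hX : ∀ v : n → ℂ, |(star v ⬝ᵥ X *ᵥ v).re| ≤ C * ∑ i, Complex.normSq (v i)) :
    ((X * Y).trace).re ≤ C * traceNorm Y := by
  have hY' : Y = U hY * Matrix.diagonal (fun i => (hY.eigenvalues i : ℂ)) * star (U hY) :=
    (herCfc_id hY).symm
  have htr : (X * Y).trace = ∑ j, (star (U hY) * X * U hY) j j * (hY.eigenvalues j : ℂ) := by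
    calc (X * Y).trace
        = ((star (U hY) * X * U hY) * Matrix.diagonal fun i => (hY.eigenvalues i : ℂ)).trace := by
          conv_lhs => rw [hY']
          rw [show X * (U hY * Matrix.diagonal (fun i => (hY.eigenvalues i : ℂ)) * star (U hY))
              = (X * U hY * Matrix.diagonal fun i => (hY.eigenvalues i : ℂ)) * star (U hY) from by
            noncomm_ring]
          rw [Matrix.trace_mul_comm]
          rw [show star (U hY) * (X * U hY * Matrix.diagonal fun i => (hY.eigenvalues i : ℂ))
              = (star (U hY) * X * U hY) * Matrix.diagonal fun i => (hY.eigenvalues i : ℂ) from by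
            noncomm_ring]
      _ = _ := trace_mul_diagonal _ _
  rw [htr, Complex.re_sum]
  have hbound : ∀ j : n, ((star (U hY) * X * U hY) j j * (hY.eigenvalues j : ℂ)).re
      ≤ |hY.eigenvalues j| * C := by
    intro j
    have hq := hX (fun i => (U hY) i j)
    rw [col_norm_one hY j, mul_one] at hq
    have hre : ((star (U hY) * X * U hY) j j * (hY.eigenvalues j : ℂ)).re
        = (star (fun i => (U hY) i j) ⬝ᵥ X *ᵥ (fun i => (U hY) i j)).re * hY.eigenvalues j := by
      rw [conj_col]
      simp [Complex.mul_re]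
    rw [hre]
    calc (star (fun i => (U hY) i j) ⬝ᵥ X *ᵥ (fun i => (U hY) i j)).re * hY.eigenvalues j
        ≤ |(star (fun i => (U hY) i j) ⬝ᵥ X *ᵥ (fun i => (U hY) i j)).re * hY.eigenvalues j| :=
          le_abs_self _
      _ = |(star (fun i => (U hY) i j) ⬝ᵥ X *ᵥ (fun i => (U hY) i j)).re| * |hY.eigenvalues j| :=
          abs_mul _ _
      _ ≤ C * |hY.eigenvalues j| := mul_le_mul_of_nonneg_right hq (abs_nonneg _)
      _ = |hY.eigenvalues j| * C := mul_comm _ _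
  calc ∑ j, ((star (U hY) * X * U hY) j j * (hY.eigenvalues j : ℂ)).re
      ≤ ∑ j, |hY.eigenvalues j| * C := Finset.sum_le_sum fun j _ => hbound j
    _ = C * traceNorm Y := by rw [traceNorm_hermitian hY, ← Finset.sum_mul, mul_comm]

lemma quad_expand (X : Matrix n n ℂ) (v : n → ℂ) :
    star v ⬝ᵥ X *ᵥ v = ∑ a, ∑ b, star (v a) * X a b * v b := by
  simp only [dotProduct, Matrix.mulVec, Pi.star_apply, Finset.mul_sum]
  apply Finset.sum_congr rfl
  intro a _
  apply Finset.sum_congr rfl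
  intro b _
  ring

lemma trace_outer (φ : n → ℂ) (M : Matrix n n ℂ) :
    (Matrix.of (fun a b => φ a * star (φ b)) * M).trace = star φ ⬝ᵥ M *ᵥ φ := by
  simp only [Matrix.trace, Matrix.diag, Matrix.mul_apply, Matrix.of_apply, dotProduct,
    Matrix.mulVec, Pi.star_apply, Finset.mul_sum]
  rw [Finset.sum_comm]
  apply Finset.sum_congr rfl
  intro b _
  apply Finset.sum_congr rfl
  intro a _
  ring

end HC

namespace PT

open Matrix

variable {k : ℕ} {d : Fin k → ℕ} (S : Finset (Fin k))

/-- The interleaving map used by the partial transpose. -/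
def m (x y : PIdx k d) : PIdx k d := fun j => if j ∈ S then x j else y j

lemma pt_apply (X : Matrix (PIdx k d) (PIdx k d) ℂ) (a b : PIdx k d) :
    partialTranspose S X a b = X (m S b a) (m S a b) := rfl

lemma m_m (a b : PIdx k d) : m S (m S a b) (m S b a) = a := by
  funext j
  by_cases h : j ∈ S <;> simp [m, h]

lemma trace_pt_mul (X Y : Matrix (PIdx k d) (PIdx k d) ℂ) :
    (partialTranspose S X * partialTranspose S Y).trace = (X * Y).trace := by
  have h1 : ∀ (A B : Matrix (PIdx k d) (PIdx k d) ℂ),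
      (A * B).trace = ∑ p : PIdx k d × PIdx k d, A p.1 p.2 * B p.2 p.1 := by
    intro A B
    rw [Fintype.sum_prod_type]
    simp [Matrix.trace, Matrix.diag, Matrix.mul_apply]
  rw [h1, h1]
  have hinv : Function.Involutive
      (fun p : PIdx k d × PIdx k d => (m S p.2 p.1, m S p.1 p.2)) := by
    intro p
    exact Prod.ext (m_m S p.1 p.2) (m_m S p.2 p.1)
  apply Fintype.sum_bijective _ hinv.bijective
  intro p
  rfl

lemma pt_isHermitian {Y : Matrix (PIdx k d) (PIdx k d) ℂ} (hY : Y.IsHermitian) :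
    (partialTranspose S Y).IsHermitian := by
  unfold Matrix.IsHermitian
  ext a b
  rw [Matrix.conjTranspose_apply, pt_apply, pt_apply]
  conv_rhs => rw [← hY.eq]
  rw [Matrix.conjTranspose_apply]

end PT

section GHZsec

open Matrix

variable {k dd : ℕ}

/-- The GHZ unit vector. -/
noncomputable def gvec (k dd : ℕ) (hk : 0 < k) : PIdx k (fun _ => dd) → ℂ :=
  fun a => if ∀ l, a l = a ⟨0, hk⟩ then (((Real.sqrt dd)⁻¹ : ℝ) : ℂ) else 0

lemma forall_const_iff (hk : 0 < k) (a : PIdx k fun _ => dd) (i : Fin dd) :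
    (∀ l, a l = i) ↔ ((∀ l, a l = a ⟨0, hk⟩) ∧ a ⟨0, hk⟩ = i) := by
  constructor
  · intro h
    exact ⟨fun l => (h l).trans (h _).symm, h _⟩
  · rintro ⟨h1, h2⟩ l
    rw [h1 l, h2]

lemma sum_ite_const (hk : 0 < k) (a : PIdx k fun _ => dd) (f : Fin dd → ℂ) :
    ∑ i, (if ∀ l, a l = i then f i else 0)
      = if ∀ l, a l = a ⟨0, hk⟩ then f (a ⟨0, hk⟩) else 0 := by
  rw [Finset.sum_eq_single (a ⟨0, hk⟩)]
  · intro i _ hne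
    apply if_neg
    intro hcon
    exact hne ((forall_const_iff hk a i).mp hcon).2.symm
  · intro h
    exact absurd (Finset.mem_univ _) h

lemma ghz_outer (hk : 0 < k) (hdd : 0 < dd) :
    GHZ k dd = Matrix.of (fun a b => gvec k dd hk a * star (gvec k dd hk b)) := by
  unfold GHZ
  ext a b
  simp only [Matrix.smul_apply, Matrix.sum_apply, Matrix.of_apply, smul_eq_mul]
  have hsplit : ∀ (i j : Fin dd), (if (∀ l, a l = i) ∧ (∀ l, b l = j) then (1:ℂ) else 0)
      = (if ∀ l, a l = i then (1:ℂ) else 0) * (if ∀ l, b l = j then (1:ℂ) else 0) := by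
    intro i j
    by_cases h1 : ∀ l, a l = i <;> by_cases h2 : ∀ l, b l = j <;> simp [h1, h2]
  have hLHS : ∑ i : Fin dd, ∑ j : Fin dd,
      (if (∀ l, a l = i) ∧ (∀ l, b l = j) then (1:ℂ) else 0)
      = (if ∀ l, a l = a ⟨0, hk⟩ then (1:ℂ) else 0) *
        (if ∀ l, b l = b ⟨0, hk⟩ then (1:ℂ) else 0) := by
    calc ∑ i : Fin dd, ∑ j : Fin dd, (if (∀ l, a l = i) ∧ (∀ l, b l = j) then (1:ℂ) else 0)
        = ∑ i : Fin dd, (if ∀ l, a l = i then (1:ℂ) else 0) *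
            ∑ j : Fin dd, (if ∀ l, b l = j then (1:ℂ) else 0) := by
          apply Finset.sum_congr rfl
          intro i _
          rw [Finset.mul_sum]
          apply Finset.sum_congr rfl
          intro j _
          exact hsplit i j
      _ = (∑ i : Fin dd, (if ∀ l, a l = i then (1:ℂ) else 0)) *
            (∑ j : Fin dd, (if ∀ l, b l = j then (1:ℂ) else 0)) := by
          rw [Finset.sum_mul]
      _ = _ := by
          rw [sum_ite_const hk a (fun _ => (1:ℂ)), sum_ite_const hk b (fun _ => (1:ℂ))]
  rw [hLHS]
  unfold gvec
  have hstar : star ((((Real.sqrt dd)⁻¹ : ℝ) : ℂ)) = (((Real.sqrt dd)⁻¹ : ℝ) : ℂ) := by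
    rw [Complex.star_def, Complex.conj_ofReal]
  have hval : (dd : ℂ)⁻¹ = (((Real.sqrt dd)⁻¹ : ℝ) : ℂ) * (((Real.sqrt dd)⁻¹ : ℝ) : ℂ) := by
    rw [← Complex.ofReal_mul, ← mul_inv, Real.mul_self_sqrt (Nat.cast_nonneg dd)]
    rw [Complex.ofReal_inv, Complex.ofReal_natCast]
  by_cases ha : ∀ l, a l = a ⟨0, hk⟩ <;> by_cases hb : ∀ l, b l = b ⟨0, hk⟩
  · rw [if_pos ha, if_pos hb, if_pos ha, if_pos hb, hstar, one_mul, mul_one]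
    exact hval
  · rw [if_pos ha, if_neg hb]
    simp [hb]
  · rw [if_neg ha, if_pos hb]
    simp [ha]
  · rw [if_neg ha, if_neg hb]
    simp [ha]

lemma const_iff (a : PIdx k fun _ => dd) (i : Fin dd) :
    (∀ l, a l = i) ↔ a = (fun _ => i) :=
  ⟨fun h => funext h, fun h l => congrFun h l⟩

lemma gvec_norm (hk : 0 < k) (hdd : 0 < dd) :
    ∑ a, Complex.normSq (gvec k dd hk a) = 1 := by
  have h1 : ∀ a : PIdx k fun _ => dd, Complex.normSq (gvec k dd hk a)
      = ∑ i : Fin dd, (if ∀ l, a l = i then (dd:ℝ)⁻¹ else 0) := by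
    intro a
    have h2 : ∑ i : Fin dd, (if ∀ l, a l = i then (dd:ℝ)⁻¹ else 0)
        = if ∀ l, a l = a ⟨0, hk⟩ then (dd:ℝ)⁻¹ else 0 := by
      rw [Finset.sum_eq_single (a ⟨0, hk⟩)]
      · intro i _ hne
        apply if_neg
        intro hcon
        exact hne ((forall_const_iff hk a i).mp hcon).2.symm
      · intro h
        exact absurd (Finset.mem_univ _) h
    rw [h2]
    unfold gvec
    by_cases h : ∀ l, a l = a ⟨0, hk⟩
    · rw [if_pos h, if_pos h, Complex.normSq_ofReal, ← mul_inv,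
        Real.mul_self_sqrt (Nat.cast_nonneg dd)]
    · rw [if_neg h, if_neg h, Complex.normSq_zero]
  calc ∑ a, Complex.normSq (gvec k dd hk a)
      = ∑ a : PIdx k fun _ => dd, ∑ i : Fin dd, (if ∀ l, a l = i then (dd:ℝ)⁻¹ else 0) := by
        exact Finset.sum_congr rfl fun a _ => h1 a
    _ = ∑ i : Fin dd, ∑ a : PIdx k fun _ => dd, (if ∀ l, a l = i then (dd:ℝ)⁻¹ else 0) :=
        Finset.sum_comm
    _ = ∑ i : Fin dd, (dd:ℝ)⁻¹ := by
        apply Finset.sum_congr rfl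
        intro i _
        have : ∀ a : PIdx k fun _ => dd, (if ∀ l, a l = i then (dd:ℝ)⁻¹ else 0)
            = (if a = (fun _ => i) then (dd:ℝ)⁻¹ else 0) := by
          intro a
          by_cases h : ∀ l, a l = i
          · rw [if_pos h, if_pos ((const_iff a i).mp h)]
          · rw [if_neg h, if_neg (fun hc => h ((const_iff a i).mpr hc))]
        rw [Finset.sum_congr rfl fun a _ => this a]
        rw [Finset.sum_ite_eq' Finset.univ (fun _ => i) (fun _ => (dd:ℝ)⁻¹)]
        rw [if_pos (Finset.mem_univ _)]
    _ = 1 := by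
        rw [Finset.sum_const, Finset.card_univ, Fintype.card_fin]
        rw [nsmul_eq_mul]
        field_simp

/-- The basis tuples appearing in the partial transpose of GHZ. -/
def gfun (S : Finset (Fin k)) (i j : Fin dd) : PIdx k (fun _ => dd) :=
  fun l => if l ∈ S then j else i

lemma ptGHZ_entry (S : Finset (Fin k)) (a b : PIdx k fun _ => dd) :
    partialTranspose S (GHZ k dd) a b
      = (dd : ℂ)⁻¹ * ∑ i : Fin dd, ∑ j : Fin dd,
          (if a = gfun S i j ∧ b = gfun S j i then (1:ℂ) else 0) := by
  rw [PT.pt_apply]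
  unfold GHZ
  simp only [Matrix.smul_apply, Matrix.sum_apply, Matrix.of_apply, smul_eq_mul]
  congr 1
  apply Finset.sum_congr rfl
  intro i _
  apply Finset.sum_congr rfl
  intro j _
  refine if_congr ?_ rfl rfl
  constructor
  · rintro ⟨h1, h2⟩
    constructor
    · funext l
      by_cases hl : l ∈ S
      · have := h2 l
        unfold PT.m at this
        rw [if_pos hl] at this
        simp [gfun, hl, this]
      · have := h1 l
        unfold PT.m at this
        rw [if_neg hl] at this
        simp [gfun, hl, this]
    · funext l
      by_cases hl : l ∈ S
      · have := h1 l
        unfold PT.m at this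
        rw [if_pos hl] at this
        simp [gfun, hl, this]
      · have := h2 l
        unfold PT.m at this
        rw [if_neg hl] at this
        simp [gfun, hl, this]
  · rintro ⟨rfl, rfl⟩
    constructor <;> intro l <;> by_cases hl : l ∈ S <;> simp [PT.m, gfun, hl]

lemma gfun_injective {S : Finset (Fin k)} (hk : 0 < k) (hS0 : (⟨0, hk⟩ : Fin k) ∉ S)
    (hSne : S.Nonempty) :
    Function.Injective (fun p : Fin dd × Fin dd => gfun S p.1 p.2) := by
  obtain ⟨l1, hl1⟩ := hSne
  intro p p' hpp
  have h1 := congrFun hpp (⟨0, hk⟩ : Fin k)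
  have h2 := congrFun hpp l1
  simp only [gfun, if_neg hS0, if_pos hl1] at h1 h2
  exact Prod.ext h1 h2

lemma ghzPT_quad (S : Finset (Fin k)) (hk : 0 < k) (hdd : 0 < dd)
    (hS0 : (⟨0, hk⟩ : Fin k) ∉ S) (hSne : S.Nonempty) (v : PIdx k (fun _ => dd) → ℂ) :
    |(star v ⬝ᵥ (partialTranspose S (GHZ k dd)) *ᵥ v).re|
      ≤ (dd:ℝ)⁻¹ * ∑ a, Complex.normSq (v a) := by
  have hform : star v ⬝ᵥ (partialTranspose S (GHZ k dd)) *ᵥ v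
      = (dd:ℂ)⁻¹ * ∑ i : Fin dd, ∑ j : Fin dd, star (v (gfun S i j)) * v (gfun S j i) := by
    rw [HC.quad_expand]
    have h1 : ∀ a b, star (v a) * partialTranspose S (GHZ k dd) a b * v b
        = (dd:ℂ)⁻¹ * ∑ i : Fin dd, ∑ j : Fin dd,
            (if a = gfun S i j ∧ b = gfun S j i then star (v a) * v b else 0) := by
      intro a b
      rw [ptGHZ_entry]
      rw [show star (v a) * ((dd:ℂ)⁻¹ * ∑ i : Fin dd, ∑ j : Fin dd,
          (if a = gfun S i j ∧ b = gfun S j i then (1:ℂ) else 0)) * v b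
          = (dd:ℂ)⁻¹ * ((∑ i : Fin dd, ∑ j : Fin dd,
          (if a = gfun S i j ∧ b = gfun S j i then (1:ℂ) else 0)) * (star (v a) * v b)) from by
        ring]
      congr 1
      rw [Finset.sum_mul]
      apply Finset.sum_congr rfl
      intro i _
      rw [Finset.sum_mul]
      apply Finset.sum_congr rfl
      intro j _
      by_cases h : a = gfun S i j ∧ b = gfun S j i
      · rw [if_pos h, if_pos h, one_mul]
      · rw [if_neg h, if_neg h, zero_mul]
    calc ∑ a, ∑ b, star (v a) * partialTranspose S (GHZ k dd) a b * v b
        = ∑ a, ∑ b, (dd:ℂ)⁻¹ * ∑ i : Fin dd, ∑ j : Fin dd,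
            (if a = gfun S i j ∧ b = gfun S j i then star (v a) * v b else 0) := by
          exact Finset.sum_congr rfl fun a _ => Finset.sum_congr rfl fun b _ => h1 a b
      _ = (dd:ℂ)⁻¹ * ∑ a, ∑ b, ∑ i : Fin dd, ∑ j : Fin dd,
            (if a = gfun S i j ∧ b = gfun S j i then star (v a) * v b else 0) := by
          rw [Finset.mul_sum]
          apply Finset.sum_congr rfl
          intro a _
          rw [Finset.mul_sum]
      _ = (dd:ℂ)⁻¹ * ∑ i : Fin dd, ∑ j : Fin dd, ∑ a, ∑ b,
            (if a = gfun S i j ∧ b = gfun S j i then star (v a) * v b else 0) := by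
          congr 1
          calc ∑ a, ∑ b, ∑ i : Fin dd, ∑ j : Fin dd,
              (if a = gfun S i j ∧ b = gfun S j i then star (v a) * v b else 0)
              = ∑ a, ∑ i : Fin dd, ∑ b, ∑ j : Fin dd,
                (if a = gfun S i j ∧ b = gfun S j i then star (v a) * v b else 0) :=
                Finset.sum_congr rfl fun a _ => Finset.sum_comm
            _ = ∑ a, ∑ i : Fin dd, ∑ j : Fin dd, ∑ b,
                (if a = gfun S i j ∧ b = gfun S j i then star (v a) * v b else 0) :=
                Finset.sum_congr rfl fun a _ => Finset.sum_congr rfl fun i _ => Finset.sum_comm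
            _ = ∑ i : Fin dd, ∑ a, ∑ j : Fin dd, ∑ b,
                (if a = gfun S i j ∧ b = gfun S j i then star (v a) * v b else 0) :=
                Finset.sum_comm
            _ = ∑ i : Fin dd, ∑ j : Fin dd, ∑ a, ∑ b,
                (if a = gfun S i j ∧ b = gfun S j i then star (v a) * v b else 0) :=
                Finset.sum_congr rfl fun i _ => Finset.sum_comm
      _ = (dd:ℂ)⁻¹ * ∑ i : Fin dd, ∑ j : Fin dd, star (v (gfun S i j)) * v (gfun S j i) := by
          congr 1
          apply Finset.sum_congr rfl
          intro i _
          apply Finset.sum_congr rfl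
          intro j _
          have hsplit : ∀ a b : PIdx k fun _ => dd,
              (if a = gfun S i j ∧ b = gfun S j i then star (v a) * v b else 0)
              = (if a = gfun S i j then star (v a) else 0) *
                (if b = gfun S j i then v b else 0) := by
            intro a b
            by_cases h1 : a = gfun S i j <;> by_cases h2 : b = gfun S j i <;>
              simp [h1, h2]
          calc ∑ a, ∑ b, (if a = gfun S i j ∧ b = gfun S j i then star (v a) * v b else 0)
              = (∑ a, (if a = gfun S i j then star (v a) else 0)) *
                (∑ b, (if b = gfun S j i then v b else 0)) := by
                rw [Finset.sum_mul_sum]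
                exact Finset.sum_congr rfl fun a _ => Finset.sum_congr rfl fun b _ => hsplit a b
            _ = star (v (gfun S i j)) * v (gfun S j i) := by
                rw [Finset.sum_ite_eq' Finset.univ (gfun S i j) (fun a => star (v a)),
                  Finset.sum_ite_eq' Finset.univ (gfun S j i) (fun b => v b)]
                rw [if_pos (Finset.mem_univ _), if_pos (Finset.mem_univ _)]
  rw [hform]
  have habs1 : |((dd:ℂ)⁻¹ * ∑ i : Fin dd, ∑ j : Fin dd,
      star (v (gfun S i j)) * v (gfun S j i)).re|
      ≤ (dd:ℝ)⁻¹ * ∑ i : Fin dd, ∑ j : Fin dd,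
          ‖v (gfun S i j)‖ * ‖v (gfun S j i)‖ := by
    calc |((dd:ℂ)⁻¹ * ∑ i : Fin dd, ∑ j : Fin dd,
        star (v (gfun S i j)) * v (gfun S j i)).re|
        ≤ ‖(dd:ℂ)⁻¹ * ∑ i : Fin dd, ∑ j : Fin dd,
            star (v (gfun S i j)) * v (gfun S j i)‖ := Complex.abs_re_le_norm _
      _ = (dd:ℝ)⁻¹ * ‖∑ i : Fin dd, ∑ j : Fin dd,
            star (v (gfun S i j)) * v (gfun S j i)‖ := by
          rw [norm_mul, norm_inv, Complex.norm_natCast]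
      _ ≤ (dd:ℝ)⁻¹ * ∑ i : Fin dd, ∑ j : Fin dd,
            ‖v (gfun S i j)‖ * ‖v (gfun S j i)‖ := by
          apply mul_le_mul_of_nonneg_left _ (by positivity)
          calc ‖∑ i : Fin dd, ∑ j : Fin dd,
              star (v (gfun S i j)) * v (gfun S j i)‖
              ≤ ∑ i : Fin dd, ‖∑ j : Fin dd,
                  star (v (gfun S i j)) * v (gfun S j i)‖ := norm_sum_le _ _
            _ ≤ ∑ i : Fin dd, ∑ j : Fin dd,
                  ‖star (v (gfun S i j)) * v (gfun S j i)‖ :=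
                Finset.sum_le_sum fun i _ => norm_sum_le _ _
            _ = ∑ i : Fin dd, ∑ j : Fin dd,
                  ‖v (gfun S i j)‖ * ‖v (gfun S j i)‖ := by
                apply Finset.sum_congr rfl
                intro i _
                apply Finset.sum_congr rfl
                intro j _
                rw [norm_mul]
                congr 1
                rw [Complex.star_def, Complex.norm_conj]
  have habs2 : ∑ i : Fin dd, ∑ j : Fin dd,
      ‖v (gfun S i j)‖ * ‖v (gfun S j i)‖
      ≤ ∑ i : Fin dd, ∑ j : Fin dd, Complex.normSq (v (gfun S i j)) := by
    have hAM : ∀ i j : Fin dd, ‖v (gfun S i j)‖ * ‖v (gfun S j i)‖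
        ≤ (Complex.normSq (v (gfun S i j)) + Complex.normSq (v (gfun S j i))) / 2 := by
      intro i j
      have h1 := Complex.sq_norm (v (gfun S i j))
      have h2 := Complex.sq_norm (v (gfun S j i))
      nlinarith [sq_nonneg (‖v (gfun S i j)‖ - ‖v (gfun S j i)‖)]
    calc ∑ i : Fin dd, ∑ j : Fin dd,
        ‖v (gfun S i j)‖ * ‖v (gfun S j i)‖
        ≤ ∑ i : Fin dd, ∑ j : Fin dd,
            (Complex.normSq (v (gfun S i j)) + Complex.normSq (v (gfun S j i))) / 2 :=
          Finset.sum_le_sum fun i _ => Finset.sum_le_sum fun j _ => hAM i j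
      _ = ∑ i : Fin dd, ∑ j : Fin dd, Complex.normSq (v (gfun S i j)) := by
          have hswap : ∑ i : Fin dd, ∑ j : Fin dd, Complex.normSq (v (gfun S j i))
              = ∑ i : Fin dd, ∑ j : Fin dd, Complex.normSq (v (gfun S i j)) :=
            Finset.sum_comm
          have hhalf : ∀ g : Fin dd → Fin dd → ℝ,
              ∑ i : Fin dd, ∑ j : Fin dd, g i j / 2
                = (∑ i : Fin dd, ∑ j : Fin dd, g i j) / 2 := by
            intro g
            rw [Finset.sum_div]
            apply Finset.sum_congr rfl
            intro i _
            rw [Finset.sum_div]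
          calc ∑ i : Fin dd, ∑ j : Fin dd,
              (Complex.normSq (v (gfun S i j)) + Complex.normSq (v (gfun S j i))) / 2
              = ∑ i : Fin dd, ∑ j : Fin dd,
                  (Complex.normSq (v (gfun S i j)) / 2
                    + Complex.normSq (v (gfun S j i)) / 2) := by
                apply Finset.sum_congr rfl
                intro i _
                apply Finset.sum_congr rfl
                intro j _
                ring
            _ = (∑ i : Fin dd, ∑ j : Fin dd, Complex.normSq (v (gfun S i j)) / 2)
                + ∑ i : Fin dd, ∑ j : Fin dd, Complex.normSq (v (gfun S j i)) / 2 := by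
                rw [← Finset.sum_add_distrib]
                apply Finset.sum_congr rfl
                intro i _
                rw [← Finset.sum_add_distrib]
            _ = ∑ i : Fin dd, ∑ j : Fin dd, Complex.normSq (v (gfun S i j)) := by
                rw [hhalf, hhalf, hswap]
                ring
  have habs3 : ∑ i : Fin dd, ∑ j : Fin dd, Complex.normSq (v (gfun S i j))
      ≤ ∑ a, Complex.normSq (v a) := by
    have hprod : ∑ i : Fin dd, ∑ j : Fin dd, Complex.normSq (v (gfun S i j))
        = ∑ p : Fin dd × Fin dd, Complex.normSq (v (gfun S p.1 p.2)) :=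
      (Fintype.sum_prod_type (f := fun p : Fin dd × Fin dd =>
        Complex.normSq (v (gfun S p.1 p.2)))).symm
    rw [hprod]
    have hinj := gfun_injective (dd := dd) hk hS0 hSne
    calc ∑ p : Fin dd × Fin dd, Complex.normSq (v (gfun S p.1 p.2))
        = ∑ a ∈ Finset.univ.image (fun p : Fin dd × Fin dd => gfun S p.1 p.2),
            Complex.normSq (v a) := by
          rw [Finset.sum_image (fun x _ y _ h => hinj h)]
      _ ≤ ∑ a, Complex.normSq (v a) := by
          apply Finset.sum_le_sum_of_subset_of_nonneg (Finset.subset_univ _)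
          intro a _ _
          exact Complex.normSq_nonneg _
  calc |((dd:ℂ)⁻¹ * ∑ i : Fin dd, ∑ j : Fin dd,
      star (v (gfun S i j)) * v (gfun S j i)).re|
      ≤ (dd:ℝ)⁻¹ * ∑ i : Fin dd, ∑ j : Fin dd,
          ‖v (gfun S i j)‖ * ‖v (gfun S j i)‖ := habs1
    _ ≤ (dd:ℝ)⁻¹ * ∑ a, Complex.normSq (v a) := by
        apply mul_le_mul_of_nonneg_left _ (by positivity)
        exact le_trans habs2 habs3

end GHZsec

section RainsBound

open Matrix

lemma rains_q_le {k dd : ℕ} (hk : 2 ≤ k) (hdd : 0 < dd)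
    {τ : Matrix (PIdx k fun _ => dd) (PIdx k fun _ => dd) ℂ}
    (hτ : τ ∈ RainsSet k (fun _ => dd)) :
    ((GHZ k dd * τ).trace).re ≤ (dd:ℝ)⁻¹ := by
  obtain ⟨hpsd, f, hfpsd, hsum, hnorm⟩ := hτ
  have hk0 : 0 < k := by omega
  rw [hsum, Matrix.mul_sum, Matrix.trace_sum, Complex.re_sum]
  have hterm : ∀ S ∈ Bipartitions k,
      ((GHZ k dd * f S).trace).re ≤ (dd:ℝ)⁻¹ * traceNorm (partialTranspose S (f S)) := by
    intro S hS
    have hmem := Finset.mem_filter.mp hS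
    have hSne : S.Nonempty := hmem.2.1
    have hS0 : (⟨0, hk0⟩ : Fin k) ∉ S := fun hin => (hmem.2.2 _ hin) rfl
    have h1 : (GHZ k dd * f S).trace
        = ((partialTranspose S (GHZ k dd)) * (partialTranspose S (f S))).trace :=
      (PT.trace_pt_mul S _ _).symm
    rw [h1]
    apply HC.trace_mul_re_le (PT.pt_isHermitian S (hfpsd S hS).1)
    intro v
    exact ghzPT_quad S hk0 hdd hS0 hSne v
  calc ∑ S ∈ Bipartitions k, ((GHZ k dd * f S).trace).re
      ≤ ∑ S ∈ Bipartitions k, (dd:ℝ)⁻¹ * traceNorm (partialTranspose S (f S)) :=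
        Finset.sum_le_sum hterm
    _ = (dd:ℝ)⁻¹ * ∑ S ∈ Bipartitions k, traceNorm (partialTranspose S (f S)) := by
        rw [Finset.mul_sum]
    _ ≤ (dd:ℝ)⁻¹ * 1 := mul_le_mul_of_nonneg_left hnorm (by positivity)
    _ = (dd:ℝ)⁻¹ := mul_one _

end RainsBound

end AuxLemmas


open Matrix

/-- GHZ-fidelity lower bound on the sandwiched Rényi–Rains entanglement. -/
theorem stmt9 {k : ℕ} (hk : 2 ≤ k) (dd : ℕ) (hdd : 2 ≤ dd) (α : ℝ) (hα : 1 < α)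
    (ρ : Matrix (PIdx k fun _ => dd) (PIdx k fun _ => dd) ℂ) (hρ : IsState ρ)
    (F : ℝ) (hF : F = ((GHZ k dd * ρ).trace).re) (hFpos : 0 < F) :
    ((Real.logb 2 dd : ℝ) : EReal) ≤
      RenyiRains α ρ - (((α / (α - 1)) * Real.logb 2 F : ℝ) : EReal) := by
  have hk0 : 0 < k := by omega
  have hdd0 : 0 < dd := by omega
  haveI : Nonempty (PIdx k fun _ => dd) := ⟨fun _ => ⟨0, hdd0⟩⟩
  have hα1 : (0:ℝ) < α - 1 := by linarith
  have houter : GHZ k dd = Matrix.of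
      (fun a b => gvec k dd hk0 a * star (gvec k dd hk0 b)) := ghz_outer hk0 hdd0
  have hφnorm : ∑ a, Complex.normSq (gvec k dd hk0 a) = 1 := gvec_norm hk0 hdd0
  have hFdot : (F : ℂ) = star (gvec k dd hk0) ⬝ᵥ ρ *ᵥ (gvec k dd hk0) := by
    have h1 : (GHZ k dd * ρ).trace = star (gvec k dd hk0) ⬝ᵥ ρ *ᵥ (gvec k dd hk0) := by
      rw [houter]; exact HC.trace_outer _ _
    rw [hF, h1]
    exact (HC.herm_quad_real hρ.1.1 _).symm
  have hlogb_rpow : ∀ x e : ℝ, 0 < x → Real.logb 2 (x ^ e) = e * Real.logb 2 x := by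
    intro x e hx
    rw [Real.logb, Real.logb, Real.log_rpow hx]
    ring
  set y : ℝ := (α / (α - 1)) * Real.logb 2 F with hy
  have hlow : ∀ τ ∈ RainsSet k (fun _ => dd),
      (((Real.logb 2 dd + y : ℝ)) : EReal) ≤ sandRenyi α ρ τ := by
    intro τ hτ
    by_cases hsupp : SuppLE ρ τ
    · unfold sandRenyi
      rw [if_neg (fun hcon => hcon.2 hsupp)]
      rw [EReal.coe_le_coe_iff]
      set qr : ℝ := ((GHZ k dd * τ).trace).re with hqr
      have hqdot : (qr : ℂ) = star (gvec k dd hk0) ⬝ᵥ τ *ᵥ (gvec k dd hk0) := by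
        have h1 : (GHZ k dd * τ).trace = star (gvec k dd hk0) ⬝ᵥ τ *ᵥ (gvec k dd hk0) := by
          rw [houter]; exact HC.trace_outer _ _
        rw [hqr, h1]
        exact (HC.herm_quad_real hτ.1.1 _).symm
      obtain ⟨hqpos, hQ⟩ := HC.key_bound hτ.1 hρ.1 hsupp hα (gvec k dd hk0) hφnorm
        hFdot hqdot hFpos
      have hqle : qr ≤ (dd:ℝ)⁻¹ := rains_q_le hk hdd0 hτ
      set Q : ℝ := ((matPow (matPow τ ((1 - α) / (2 * α)) * ρ *
        matPow τ ((1 - α) / (2 * α))) α).trace).re with hQdef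
      have hdq : (dd:ℝ) ^ (α - 1) ≤ qr ^ (1 - α) := by
        have h1 : ((dd:ℝ)⁻¹) ^ (1 - α) ≤ qr ^ (1 - α) :=
          Real.rpow_le_rpow_of_nonpos hqpos hqle (by linarith)
        calc (dd:ℝ) ^ (α - 1) = ((dd:ℝ)⁻¹) ^ (1 - α) := by
              rw [Real.inv_rpow (by positivity), ← Real.rpow_neg (by positivity), neg_sub]
          _ ≤ qr ^ (1 - α) := h1
      have hQlb : F ^ α * (dd:ℝ) ^ (α - 1) ≤ Q := by
        calc F ^ α * (dd:ℝ) ^ (α - 1) ≤ F ^ α * qr ^ (1 - α) :=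
              mul_le_mul_of_nonneg_left hdq (Real.rpow_nonneg hFpos.le α)
          _ ≤ Q := hQ
      have hprodpos : (0:ℝ) < F ^ α * (dd:ℝ) ^ (α - 1) := by
        apply mul_pos (Real.rpow_pos_of_pos hFpos α) (Real.rpow_pos_of_pos (by positivity) _)
      have hQpos : 0 < Q := lt_of_lt_of_le hprodpos hQlb
      have h1 : Real.logb 2 (F ^ α * (dd:ℝ) ^ (α - 1)) ≤ Real.logb 2 Q :=
        Real.logb_le_logb_of_le (by norm_num) hprodpos hQlb
      have hlogb : Real.logb 2 (F ^ α * (dd:ℝ) ^ (α - 1))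
          = α * Real.logb 2 F + (α - 1) * Real.logb 2 dd := by
        rw [Real.logb_mul (ne_of_gt (Real.rpow_pos_of_pos hFpos α))
          (ne_of_gt (Real.rpow_pos_of_pos (by positivity) _))]
        rw [hlogb_rpow F α hFpos, hlogb_rpow (dd:ℝ) (α - 1) (by positivity)]
      rw [hlogb] at h1
      have h2 : (α - 1)⁻¹ * (α * Real.logb 2 F + (α - 1) * Real.logb 2 dd)
          ≤ (α - 1)⁻¹ * Real.logb 2 Q :=
        mul_le_mul_of_nonneg_left h1 (by positivity)
      have h3 : (α - 1)⁻¹ * (α * Real.logb 2 F + (α - 1) * Real.logb 2 dd)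
          = Real.logb 2 dd + (α / (α - 1)) * Real.logb 2 F := by
        field_simp
        ring
      rw [hy]
      linarith
    · unfold sandRenyi
      rw [if_pos ⟨hα, hsupp⟩]
      exact le_top
  have hInf : (((Real.logb 2 dd + y : ℝ)) : EReal) ≤ RenyiRains α ρ := le_iInf₂ hlow
  calc ((Real.logb 2 dd : ℝ) : EReal)
      = (((Real.logb 2 dd + y : ℝ)) : EReal) + ((-y : ℝ) : EReal) := by
        rw [← EReal.coe_add]
        congr 1
        ring
    _ ≤ RenyiRains α ρ + ((-y : ℝ) : EReal) := add_le_add_left hInf _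
    _ = RenyiRains α ρ - ((y : ℝ) : EReal) := by
        rw [sub_eq_add_neg, EReal.coe_neg]
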